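/- Let a group G act on a tree T with base vertex v₀, and let φ: V → E ⊔ {∗} be the Julg–Valette bijection (last edge of the geodesic from v₀). For g ∈ G and a vertex v, one has φ(gv) = g·φ(v) whenever v does not lie on the geodesic from v₀ to g⁻¹v₀. In particular, for each fixed g ∈ G, the set {v ∈ V : φ(gv) ≠ g·φ(v)} is finite. -/

import Mathlib

private lemma list_getLast_concat {α : Type*} {l l' : List α} {a : α}
    (h : l = l' ++ [a]) (hne : l ≠ []) : l.getLast hne = a := by
  subst h; simp

private lemma list_getLast_map {α β : Type*} (f : α → β) (l : List α) (h : l ≠ [])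
    (h' : l.map f ≠ []) : (l.map f).getLast h' = f (l.getLast h) := by
  rcases l.eq_nil_or_concat with rfl | ⟨l', a, rfl⟩
  · exact absurd rfl h
  · simp

private lemma edges_ne_nil_of_ne {V : Type*} {G : SimpleGraph V} {u v : V}
    (h : u ≠ v) (p : G.Walk u v) : p.edges ≠ [] := by
  cases p with
  | nil => exact absurd rfl h
  | cons h p => simp

private lemma lastEdge_eq {V : Type*} {G : SimpleGraph V} (hG : G.IsTree) {v₀ b v : V}
    (p : G.Walk v₀ b) (hp : p.IsPath) (hv : v ∉ p.support)
    (r : G.Walk v₀ v) (hr : r.IsPath) (q : G.Walk b v) (hq : q.IsPath)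
    (hner : r.edges ≠ []) (hneq : q.edges ≠ []) :
    r.edges.getLast hner = q.edges.getLast hneq := by
  classical
  have hv0 : v ≠ v₀ := fun h => hv (by rw [h]; exact p.start_mem_support)
  have hvb : v ≠ b := fun h => hv (by rw [h]; exact p.end_mem_support)
  obtain ⟨u, h₁, s₁, hs⟩ := SimpleGraph.Walk.exists_eq_cons_of_ne hv0 r.reverse
  obtain ⟨u', h₂, t₁, ht⟩ := SimpleGraph.Walk.exists_eq_cons_of_ne hvb q.reverse
  have hsP : s₁.IsPath ∧ v ∉ s₁.support := by
    have := hr.reverse; rw [hs, SimpleGraph.Walk.cons_isPath_iff] at this; exact this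
  have htP : t₁.IsPath ∧ v ∉ t₁.support := by
    have := hq.reverse; rw [ht, SimpleGraph.Walk.cons_isPath_iff] at this; exact this
  have hre : r.edges = s₁.reverse.edges ++ [s(u, v)] := by
    conv_lhs => rw [← r.reverse_reverse, hs]
    simp [SimpleGraph.Walk.edges_append, Sym2.eq_swap]
  have hqe : q.edges = t₁.reverse.edges ++ [s(u', v)] := by
    conv_lhs => rw [← q.reverse_reverse, ht]
    simp [SimpleGraph.Walk.edges_append, Sym2.eq_swap]
  have key : u = u' := by
    by_contra hne
    have hdisj : ∀ x, x ∈ s₁.support → x ∈ t₁.support → False := by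
      intro x hx₁ hx₂
      have hc₁ : (SimpleGraph.Walk.cons h₁ (s₁.takeUntil x hx₁)).IsPath := by
        rw [SimpleGraph.Walk.cons_isPath_iff]
        exact ⟨hsP.1.takeUntil _, fun hmem =>
          hsP.2 (SimpleGraph.Walk.support_takeUntil_subset _ _ hmem)⟩
      have hc₂ : (SimpleGraph.Walk.cons h₂ (t₁.takeUntil x hx₂)).IsPath := by
        rw [SimpleGraph.Walk.cons_isPath_iff]
        exact ⟨htP.1.takeUntil _, fun hmem =>
          htP.2 (SimpleGraph.Walk.support_takeUntil_subset _ _ hmem)⟩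
      have heq := (hG.existsUnique_path v x).unique hc₁ hc₂
      have := congrArg SimpleGraph.Walk.edges heq
      simp only [SimpleGraph.Walk.edges_cons, List.cons.injEq] at this
      exact hne (Sym2.congr_right.mp this.1)
    set w : G.Walk v₀ b :=
      s₁.reverse.append (SimpleGraph.Walk.cons h₁.symm (SimpleGraph.Walk.cons h₂ t₁)) with hw
    have hwsup : w.support = s₁.support.reverse ++ (v :: t₁.support) := by
      simp [hw, SimpleGraph.Walk.support_append]
    have hwp : w.IsPath := by
      rw [SimpleGraph.Walk.isPath_def, hwsup, List.nodup_append]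
      refine ⟨by simpa using hsP.1.support_nodup, ?_, ?_⟩
      · have := hq.reverse; rw [ht] at this
        simpa using this.support_nodup
      · rintro x hx₁ _ hx₂ rfl
        rw [List.mem_reverse] at hx₁
        rcases List.mem_cons.mp hx₂ with rfl | hx₂
        · exact hsP.2 hx₁
        · exact hdisj x hx₁ hx₂
    have hwep := (hG.existsUnique_path v₀ b).unique hwp hp
    apply hv
    rw [← hwep, hwsup]
    simp
  subst key
  rw [list_getLast_concat hre, list_getLast_concat hqe]

/-- Equivariance of the Julg–Valette map.  A group `Γ` acts on a tree `G`
(by graph automorphisms); `φ` sends `v₀` to `∗` and any other vertex to the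
last edge of the path from `v₀` to it.  Then `φ (g • v) = g • φ v` whenever
`v` does not lie on the geodesic from `v₀` to `g⁻¹ • v₀`; in particular, for
each `g` the set of vertices `v` with `φ (g • v) ≠ g • φ v` is finite. -/
theorem julgValette_almost_equivariant {V : Type*} (G : SimpleGraph V)
    (hG : G.IsTree) {Γ : Type*} [Group Γ] [MulAction Γ V]
    (hact : ∀ (g : Γ) (v w : V), G.Adj (g • v) (g • w) ↔ G.Adj v w)
    (v₀ : V) (φ : V → Sym2 V ⊕ Unit)
    (hφ₀ : φ v₀ = Sum.inr Unit.unit)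
    (hφ : ∀ (v : V) (p : G.Walk v₀ v), p.IsPath → ∀ hne : p.edges ≠ [],
      φ v = Sum.inl (p.edges.getLast hne)) :
    ∀ g : Γ,
      (∀ v : V, (∀ p : G.Walk v₀ (g⁻¹ • v₀), p.IsPath → v ∉ p.support) →
        φ (g • v) = Sum.map (Sym2.map (g • ·)) id (φ v)) ∧
      {v : V | φ (g • v) ≠ Sum.map (Sym2.map (g • ·)) id (φ v)}.Finite := by
  classical
  intro g
  obtain ⟨p, hp, huniq⟩ := hG.existsUnique_path v₀ (g⁻¹ • v₀)
  have h1 : ∀ v : V, (∀ p : G.Walk v₀ (g⁻¹ • v₀), p.IsPath → v ∉ p.support) →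
      φ (g • v) = Sum.map (Sym2.map (g • ·)) id (φ v) := by
    intro v hv'
    have hv : v ∉ p.support := hv' p hp
    have hv0 : v₀ ≠ v := fun h => hv (by rw [← h]; exact p.start_mem_support)
    have hvb : g⁻¹ • v₀ ≠ v := fun h => hv (by rw [← h]; exact p.end_mem_support)
    obtain ⟨r, hr, -⟩ := hG.existsUnique_path v₀ v
    obtain ⟨q, hq, -⟩ := hG.existsUnique_path (g⁻¹ • v₀) v
    have hner : r.edges ≠ [] := edges_ne_nil_of_ne hv0 r
    have hneq : q.edges ≠ [] := edges_ne_nil_of_ne hvb q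
    have hkey := lastEdge_eq hG p hp hv r hr q hq hner hneq
    -- the graph isomorphism given by the action of g
    let e : G ≃g G := ⟨MulAction.toPerm g, hact g _ _⟩
    let q' : G.Walk v₀ (g • v) := (q.map e.toHom).copy (smul_inv_smul g v₀) rfl
    have hq' : q'.IsPath := by
      exact (SimpleGraph.Walk.isPath_copy _ _ _).mpr
        (SimpleGraph.Walk.map_isPath_of_injective (e.toEquiv.injective) hq)
    have hq'e : q'.edges = q.edges.map (Sym2.map (g • ·)) := by
      exact (SimpleGraph.Walk.edges_copy _ _ _).trans
        (by rw [SimpleGraph.Walk.edges_map]; rfl)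
    have hne' : q'.edges ≠ [] := by
      rw [hq'e]; simpa using hneq
    rw [hφ v r hr hner, hφ (g • v) q' hq' hne']
    simp only [Sum.map_inl, Sum.inl.injEq]
    rw [List.getLast_congr _ (by simpa using hneq) hq'e, list_getLast_map _ _ hneq, hkey]
  refine ⟨h1, ?_⟩
  apply Set.Finite.subset (p.support.toFinset : Finset V).finite_toSet
  intro v hv
  simp only [Finset.mem_coe, List.mem_toFinset]
  by_contra hns
  exact hv (h1 v fun p' hp' => by rw [huniq p' hp']; exact hns)
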